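/- Let a graph inverse semigroup G(E) be a dense subsemigroup of a Hausdorff CLP-compact topological semigroup S. Then for every vertex f ∈ E⁰ through which no cycle passes, the set I_f = {u ∈ Path(E) : r(u) = f} is finite; moreover, the set {uv⁻¹ ∈ G(E) : no cycle passes through r(u)} ∪ {0} is a compact subset of S. -/

import Mathlib

/-! Preamble: graph inverse semigroups and compactness-type properties. -/

namespace GISPaper

variable {V E : Type*}

/-- `IsPathFrom src rng v l` means that the list of edges `l` is composable
and starts at the vertex `v`. -/
def IsPathFrom (src rng : E → V) : V → List E → Prop
  | _, [] => True
  | v, e :: l => src e = v ∧ IsPathFrom src rng (rng e) l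

/-- The end vertex of a list of edges starting at the vertex `v`. -/
def pathEnd (rng : E → V) : V → List E → V
  | v, [] => v
  | _, e :: l => pathEnd rng (rng e) l

theorem pathEnd_append (rng : E → V) (v : V) (l₁ l₂ : List E) :
    pathEnd rng v (l₁ ++ l₂) = pathEnd rng (pathEnd rng v l₁) l₂ := by
  induction l₁ generalizing v with
  | nil => rfl
  | cons e l ih => simpa [pathEnd] using ih (rng e)

theorem isPathFrom_append (src rng : E → V) (v : V) (l₁ l₂ : List E) :
    IsPathFrom src rng v (l₁ ++ l₂) ↔
      IsPathFrom src rng v l₁ ∧ IsPathFrom src rng (pathEnd rng v l₁) l₂ := by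
  induction l₁ generalizing v with
  | nil => simp [IsPathFrom, pathEnd]
  | cons e l ih => simp [IsPathFrom, pathEnd, ih (rng e), and_assoc]

/-- A (directed) path in the graph `(V, E, src, rng)`: a starting vertex together
with a composable list of edges (a path of length zero is just a vertex). -/
structure GPath (src rng : E → V) where
  start : V
  edges : List E
  isPath : IsPathFrom src rng start edges

/-- The range (end vertex) of a path. -/
def GPath.range {src rng : E → V} (p : GPath src rng) : V :=
  pathEnd rng p.start p.edges

/-- The nonzero elements of the graph inverse semigroup: pairs `u v⁻¹` of paths
with `r u = r v`. -/
def GISElem (src rng : E → V) : Type _ :=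
  {p : GPath src rng × GPath src rng // p.1.range = p.2.range}

/-- The graph inverse semigroup over the graph `(V, E, src, rng)`: the nonzero
elements `u v⁻¹` together with a zero element (represented by `none`). -/
def GIS (src rng : E → V) : Type _ := Option (GISElem src rng)

instance {src rng : E → V} : Zero (GIS src rng) :=
  ⟨(none : Option (GISElem src rng))⟩

open Classical in
/-- The multiplication of a graph inverse semigroup:
`u₁v₁⁻¹ · u₂v₂⁻¹ = u₁w v₂⁻¹` if `u₂ = v₁ w`, `u₁v₁⁻¹ · u₂v₂⁻¹ = u₁ (v₂ w)⁻¹` if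
`v₁ = u₂ w`, and `0` otherwise; `0` is absorbing. -/
noncomputable def GIS.mul {src rng : E → V} :
    Option (GISElem src rng) → Option (GISElem src rng) → Option (GISElem src rng)
  | some ⟨(u₁, v₁), h₁⟩, some ⟨(u₂, v₂), h₂⟩ =>
    if h : v₁.start = u₂.start ∧ v₁.edges <+: u₂.edges then
      some ⟨(⟨u₁.start, u₁.edges ++ u₂.edges.drop v₁.edges.length, by
        obtain ⟨hs, t, ht⟩ := h
        have hdrop : u₂.edges.drop v₁.edges.length = t := by
          rw [← ht, List.drop_left]
        have hu₂ := u₂.isPath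
        rw [← ht, isPathFrom_append] at hu₂
        rw [hdrop, isPathFrom_append]
        refine ⟨u₁.isPath, ?_⟩
        have he : pathEnd rng u₁.start u₁.edges = pathEnd rng u₂.start v₁.edges := by
          rw [← hs]; exact h₁
        rw [he]; exact hu₂.2⟩, v₂), by
        show pathEnd rng u₁.start (u₁.edges ++ u₂.edges.drop v₁.edges.length) = v₂.range
        obtain ⟨hs, t, ht⟩ := h
        have hdrop : u₂.edges.drop v₁.edges.length = t := by
          rw [← ht, List.drop_left]
        rw [hdrop, pathEnd_append]
        have he : pathEnd rng u₁.start u₁.edges = pathEnd rng u₂.start v₁.edges := by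
          rw [← hs]; exact h₁
        rw [he, ← pathEnd_append, ht]
        exact h₂⟩
    else if h' : u₂.start = v₁.start ∧ u₂.edges <+: v₁.edges then
      some ⟨(u₁, ⟨v₂.start, v₂.edges ++ v₁.edges.drop u₂.edges.length, by
        obtain ⟨hs, t, ht⟩ := h'
        have hdrop : v₁.edges.drop u₂.edges.length = t := by
          rw [← ht, List.drop_left]
        have hv₁ := v₁.isPath
        rw [← ht, isPathFrom_append] at hv₁
        rw [hdrop, isPathFrom_append]
        refine ⟨v₂.isPath, ?_⟩
        have he : pathEnd rng v₂.start v₂.edges = pathEnd rng v₁.start u₂.edges := by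
          rw [← hs]; exact h₂.symm
        rw [he]; exact hv₁.2⟩), by
        show u₁.range = pathEnd rng v₂.start (v₂.edges ++ v₁.edges.drop u₂.edges.length)
        obtain ⟨hs, t, ht⟩ := h'
        have hdrop : v₁.edges.drop u₂.edges.length = t := by
          rw [← ht, List.drop_left]
        have he : pathEnd rng v₂.start v₂.edges = pathEnd rng v₁.start u₂.edges := by
          rw [← hs]; exact h₂.symm
        rw [hdrop, pathEnd_append, he, ← pathEnd_append, ht]
        exact h₁⟩
    else none
  | _, _ => none

noncomputable instance {src rng : E → V} : Mul (GIS src rng) := ⟨GIS.mul⟩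

theorem GIS.zero_mul {src rng : E → V} (x : GIS src rng) : 0 * x = 0 := rfl

/-- The topology in which every nonzero point is isolated and the open
neighbourhoods of `0` are exactly the cofinite sets containing `0`. -/
def tauC (α : Type*) [Zero α] : TopologicalSpace α where
  IsOpen U := (0 : α) ∈ U → Uᶜ.Finite
  isOpen_univ := by simp
  isOpen_inter U W hU hW h := by
    rw [Set.compl_inter]
    exact (hU h.1).union (hW h.2)
  isOpen_sUnion 𝒮 h h0 := by
    obtain ⟨U, hU, hU0⟩ := h0
    exact (h U hU hU0).subset (Set.compl_subset_compl.mpr (Set.subset_sUnion_of_mem hU))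

/-- A topological space is CLP-compact if every cover by clopen sets has a
finite subcover. -/
def CLPCompact (X : Type*) [TopologicalSpace X] : Prop :=
  ∀ 𝒰 : Set (Set X), (∀ U ∈ 𝒰, IsClopen U) → ⋃₀ 𝒰 = Set.univ →
    ∃ ℱ ⊆ 𝒰, ℱ.Finite ∧ ⋃₀ ℱ = Set.univ

/-- A topological space is countably compact if every infinite subset has an
accumulation point. -/
def CountablyCompactSpace (X : Type*) [TopologicalSpace X] : Prop :=
  ∀ B : Set X, B.Infinite → ∃ x : X, AccPt x (Filter.principal B)

/-- A topological space is feebly compact if every locally finite family of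
nonempty open sets is finite. -/
def FeeblyCompact (X : Type*) [TopologicalSpace X] : Prop :=
  ∀ 𝒰 : Set (Set X), (∀ U ∈ 𝒰, IsOpen U ∧ U.Nonempty) →
    (∀ x : X, ∃ N ∈ nhds x, {U ∈ 𝒰 | (U ∩ N).Nonempty}.Finite) → 𝒰.Finite

/-- The multiplication of the bicyclic monoid on `ℕ × ℕ`. -/
def bicyclicMul (x y : ℕ × ℕ) : ℕ × ℕ :=
  (x.1 + y.1 - min x.2 y.1, x.2 + y.2 - min x.2 y.1)

/-- The multiplication of the semigroup of `X × X`-matrix units (with zero `none`). -/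
def matUnitsMul {X : Type*} [DecidableEq X] :
    Option (X × X) → Option (X × X) → Option (X × X)
  | some (a, b), some (c, d) => if b = c then some (a, d) else none
  | _, _ => none

/-- A cycle based at the vertex `e`: a path of nonzero length from `e` to `e`. -/
def HasCycleAt (src rng : E → V) (e : V) : Prop :=
  ∃ p : GPath src rng, p.edges ≠ [] ∧ p.start = e ∧ p.range = e

end GISPaper

/-!
The image `z` of `0` is a two-sided zero of `S`, by density. Every vertex `f` is an isolated
point of `S`, and then so are `u`, `u⁻¹` and `u u⁻¹` for every path `u`: they are the only
solutions in `G(E)` of `u⁻¹ x = r(u)`, of `x u = r(u)`, and (up to finitely many `p p⁻¹`, `p` a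
prefix of `u`) of `x u = u`.

In a CLP-compact space an infinite set of isolated points is never closed, so an injective
family of isolated points that avoids a neighbourhood of `z` infinitely often has a cluster
point `x ≠ z` along the cofinite filter. This is impossible for orthogonal idempotents, and for
a family `C` with `A i C i = C i` (or `C i A i = C i`) where `A → z`. If infinitely many paths
`u` ended at a vertex `f` without cycles through it, the `u u⁻¹` would be orthogonal
idempotents, so `u → z` and `u⁻¹ → z`, whence `f = u⁻¹ u → z`: contradiction. Once every `I_f`
is finite, the vertices tend to `z`, hence so do `u`, `u⁻¹` and `u v⁻¹` over paths with
cycle-free range, and such a family together with its limit `z` is compact.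
-/

namespace GISPaper

variable {V E : Type*} {src rng : E → V}

namespace GPath

theorem ext {p q : GPath src rng} (hs : p.start = q.start) (he : p.edges = q.edges) :
    p = q := by
  cases p; cases q; cases hs; cases he; rfl

def vertex (src rng : E → V) (f : V) : GPath src rng := ⟨f, [], trivial⟩

@[simp] theorem vertex_start (f : V) : (vertex src rng f).start = f := rfl
@[simp] theorem vertex_edges (f : V) : (vertex src rng f).edges = [] := rfl
@[simp] theorem range_vertex (f : V) : (vertex src rng f).range = f := rfl

def IsPrefix (p q : GPath src rng) : Prop := p.start = q.start ∧ p.edges <+: q.edges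

theorem IsPrefix.refl (p : GPath src rng) : p.IsPrefix p := ⟨rfl, List.prefix_refl _⟩

theorem vertex_isPrefix {p : GPath src rng} {f : V} (h : p.start = f) :
    (vertex src rng f).IsPrefix p :=
  ⟨h.symm, List.nil_prefix⟩

theorem IsPrefix.eq_of_length_le {p q : GPath src rng} (h : p.IsPrefix q)
    (hl : q.edges.length ≤ p.edges.length) : p = q :=
  ext h.1 (h.2.eq_of_length (le_antisymm h.2.length_le hl))

theorem IsPrefix.eq_of_length_eq {p q r : GPath src rng} (hp : p.IsPrefix r) (hq : q.IsPrefix r)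
    (hl : p.edges.length = q.edges.length) : p = q :=
  ext (hp.1.trans hq.1.symm) (List.prefix_of_prefix_length_le hp.2 hq.2 hl.le |>.eq_of_length hl)

theorem IsPrefix.edges_eq_append_drop {p q : GPath src rng} (h : p.IsPrefix q) :
    q.edges = p.edges ++ q.edges.drop p.edges.length := by
  obtain ⟨t, ht⟩ := h.2
  rw [← ht, List.drop_left]

theorem finite_setOf_isPrefix (q : GPath src rng) : {p : GPath src rng | p.IsPrefix q}.Finite := by
  refine Set.Finite.of_finite_image (f := edges) ((List.finite_toSet q.edges.inits).subset ?_) ?_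
  · rintro _ ⟨p, hp, rfl⟩
    exact List.mem_inits _ _ |>.2 hp.2
  · intro p hp p' hp' he
    exact ext (hp.1.trans hp'.1.symm) he

theorem IsPrefix.eq_of_range_eq {f : V} (hf : ¬ HasCycleAt src rng f) {p q : GPath src rng}
    (h : p.IsPrefix q) (hp : p.range = f) (hq : q.range = f) : p = q := by
  obtain ⟨hs, t, ht⟩ := h
  have hpf : pathEnd rng q.start p.edges = f := hs ▸ hp
  have ht_path : IsPathFrom src rng f t := by
    have hq' := q.isPath
    rw [← ht, isPathFrom_append, hpf] at hq'
    exact hq'.2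
  have ht_end : pathEnd rng f t = f := by
    rw [← hpf, ← pathEnd_append, ht, hpf]; exact hq
  have ht_nil : t = [] := by
    by_contra hne
    exact hf ⟨⟨f, t, ht_path⟩, hne, rfl, ht_end⟩
  exact ext hs (by rw [← ht, ht_nil, List.append_nil])

end GPath

namespace GIS

open GPath

/-- `mk u v h` is the element `u v⁻¹`; `vert f`, `path u`, `pathInv u` and `proj u` below are the
elements `f`, `u`, `u⁻¹` and `u u⁻¹`. -/
def mk (u v : GPath src rng) (h : u.range = v.range) : GIS src rng := some ⟨(u, v), h⟩

theorem eq_zero_or_exists_eq_mk (x : GIS src rng) :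
    x = 0 ∨ ∃ u v h, x = mk u v h := by
  rcases x with _ | ⟨⟨u, v⟩, h⟩
  · exact Or.inl rfl
  · exact Or.inr ⟨u, v, h, rfl⟩

theorem mk_ne_zero {u v : GPath src rng} {h : u.range = v.range} : mk u v h ≠ 0 :=
  Option.some_ne_none _

theorem mk_inj {u v u' v' : GPath src rng} {h : u.range = v.range} {h' : u'.range = v'.range} :
    mk u v h = mk u' v' h' ↔ u = u' ∧ v = v' := by
  constructor
  · rintro ⟨⟩
    exact ⟨rfl, rfl⟩
  · rintro ⟨rfl, rfl⟩
    rfl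

variable {u₁ v₁ u₂ v₂ : GPath src rng} {h₁ : u₁.range = v₁.range} {h₂ : u₂.range = v₂.range}

theorem mk_mul_mk_of_isPrefix (h : v₁.IsPrefix u₂) {w : GPath src rng}
    (hs : w.start = u₁.start) (he : w.edges = u₁.edges ++ u₂.edges.drop v₁.edges.length)
    (hw : w.range = v₂.range) :
    mk u₁ v₁ h₁ * mk u₂ v₂ h₂ = mk w v₂ hw := by
  change GIS.mul (some ⟨(u₁, v₁), h₁⟩) (some ⟨(u₂, v₂), h₂⟩) = some ⟨(w, v₂), hw⟩
  rw [GIS.mul, dif_pos (show _ ∧ _ from h)]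
  exact congrArg some (Subtype.ext (Prod.ext (ext hs.symm he.symm) rfl))

theorem mk_mul_mk_of_isPrefix' (h : u₂.IsPrefix v₁) {w : GPath src rng}
    (hs : w.start = v₂.start) (he : w.edges = v₂.edges ++ v₁.edges.drop u₂.edges.length)
    (hw : u₁.range = w.range) :
    mk u₁ v₁ h₁ * mk u₂ v₂ h₂ = mk u₁ w hw := by
  by_cases h' : v₁.IsPrefix u₂
  · obtain rfl : v₁ = u₂ := h'.eq_of_length_le h.2.length_le
    rw [mk_mul_mk_of_isPrefix h' rfl (by simp) (h₁.trans h₂), mk_inj]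
    exact ⟨rfl, (ext hs (by simp [he])).symm⟩
  · change GIS.mul (some ⟨(u₁, v₁), h₁⟩) (some ⟨(u₂, v₂), h₂⟩) = some ⟨(u₁, w), hw⟩
    rw [GIS.mul, dif_neg (show ¬ (_ ∧ _) from h'), dif_pos (show _ ∧ _ from h)]
    exact congrArg some (Subtype.ext (Prod.ext rfl (ext hs.symm he.symm)))

theorem mk_mul_mk_eq_zero (h : ¬ v₁.IsPrefix u₂) (h' : ¬ u₂.IsPrefix v₁) :
    mk u₁ v₁ h₁ * mk u₂ v₂ h₂ = 0 := by
  change GIS.mul (some ⟨(u₁, v₁), h₁⟩) (some ⟨(u₂, v₂), h₂⟩) = none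
  rw [GIS.mul, dif_neg (show ¬ (_ ∧ _) from h), dif_neg (show ¬ (_ ∧ _) from h')]

theorem mk_mul_mk_eq_mk {u v : GPath src rng} {h : u.range = v.range}
    (H : mk u₁ v₁ h₁ * mk u₂ v₂ h₂ = mk u v h) :
    (v₁.IsPrefix u₂ ∧ u.start = u₁.start ∧
        u.edges = u₁.edges ++ u₂.edges.drop v₁.edges.length ∧ v = v₂) ∨
      (u₂.IsPrefix v₁ ∧ u = u₁ ∧ v.start = v₂.start ∧
        v.edges = v₂.edges ++ v₁.edges.drop u₂.edges.length) := by
  change GIS.mul (some ⟨(u₁, v₁), h₁⟩) (some ⟨(u₂, v₂), h₂⟩) = some ⟨(u, v), h⟩ at H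
  rw [GIS.mul] at H
  split_ifs at H with hA hB
  · cases H
    exact Or.inl ⟨hA, rfl, rfl, rfl⟩
  · cases H
    exact Or.inr ⟨hB, rfl, rfl, rfl⟩

theorem mul_zero (x : GIS src rng) : x * 0 = 0 := by
  rcases x with _ | ⟨⟨u, v⟩, h⟩ <;> rfl

def vert (src rng : E → V) (f : V) : GIS src rng := mk (vertex src rng f) (vertex src rng f) rfl

def path (u : GPath src rng) : GIS src rng := mk u (vertex src rng u.range) rfl

def pathInv (u : GPath src rng) : GIS src rng := mk (vertex src rng u.range) u rfl

def proj (u : GPath src rng) : GIS src rng := mk u u rfl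

variable {u v : GPath src rng} {huv : u.range = v.range} {f : V}

theorem vert_mul_mk (h : u.start = f) : vert src rng f * mk u v huv = mk u v huv :=
  mk_mul_mk_of_isPrefix (vertex_isPrefix h) h (by simp) huv

theorem vert_mul_mk_of_ne (h : u.start ≠ f) : vert src rng f * mk u v huv = 0 :=
  mk_mul_mk_eq_zero (fun hp => h hp.1.symm) (fun hp => h hp.1)

theorem mk_mul_vert (h : v.start = f) : mk u v huv * vert src rng f = mk u v huv :=
  mk_mul_mk_of_isPrefix' (vertex_isPrefix h) h (by simp) huv

theorem mk_mul_vert_of_ne (h : v.start ≠ f) : mk u v huv * vert src rng f = 0 :=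
  mk_mul_mk_eq_zero (fun hp => h hp.1) (fun hp => h hp.1.symm)

theorem vert_mul_self (f : V) : vert src rng f * vert src rng f = vert src rng f :=
  vert_mul_mk rfl

theorem vert_mul_vert_of_ne {g : V} (h : f ≠ g) : vert src rng f * vert src rng g = 0 :=
  vert_mul_mk_of_ne h.symm

theorem vert_ne_zero (f : V) : vert src rng f ≠ 0 := mk_ne_zero

theorem path_mul_vert (u : GPath src rng) : path u * vert src rng u.range = path u :=
  mk_mul_vert rfl

theorem vert_mul_pathInv (u : GPath src rng) : vert src rng u.range * pathInv u = pathInv u :=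
  vert_mul_mk rfl

theorem pathInv_mul_path (u : GPath src rng) : pathInv u * path u = vert src rng u.range :=
  mk_mul_mk_of_isPrefix (.refl u) rfl (by simp) rfl

theorem path_mul_pathInv (h : u.range = v.range) : path u * pathInv v = mk u v h :=
  mk_mul_mk_of_isPrefix (vertex_isPrefix h.symm) rfl (by simp) h

theorem proj_mul_path (u : GPath src rng) : proj u * path u = path u :=
  mk_mul_mk_of_isPrefix (u₁ := u) (v₂ := vertex src rng u.range) (w := u) (.refl u) rfl
    (by simp) rfl

theorem pathInv_mul_proj (u : GPath src rng) : pathInv u * proj u = pathInv u :=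
  mk_mul_mk_of_isPrefix (u₁ := vertex src rng u.range) (v₂ := u) (w := vertex src rng u.range)
    (.refl u) rfl (by simp) rfl

theorem proj_mul_self (u : GPath src rng) : proj u * proj u = proj u :=
  mk_mul_mk_of_isPrefix (.refl u) rfl (by simp) rfl

theorem proj_mul_proj_of_ne (hf : ¬ HasCycleAt src rng f) {u' : GPath src rng}
    (hu : u.range = f) (hu' : u'.range = f) (hne : u ≠ u') : proj u * proj u' = 0 :=
  mk_mul_mk_eq_zero (fun h => hne (h.eq_of_range_eq hf hu hu'))
    (fun h => hne (h.eq_of_range_eq hf hu' hu).symm)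

theorem proj_mul_vert (h : u.start = f) : proj u * vert src rng f = proj u :=
  mk_mul_vert h

theorem vert_mul_proj (h : u.start = f) : vert src rng f * proj u = proj u :=
  vert_mul_mk h

theorem proj_ne_vert {c : GPath src rng} (hc : c.edges ≠ []) : proj c ≠ vert src rng f :=
  fun h => hc (congrArg edges (mk_inj.1 h).1)

theorem path_injective : Function.Injective (path : GPath src rng → GIS src rng) :=
  fun _ _ h => (mk_inj.1 h).1

theorem pathInv_injective : Function.Injective (pathInv : GPath src rng → GIS src rng) :=
  fun _ _ h => (mk_inj.1 h).2

theorem proj_injective : Function.Injective (proj : GPath src rng → GIS src rng) :=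
  fun _ _ h => (mk_inj.1 h).1

theorem vert_injective : Function.Injective (vert src rng) :=
  fun _ _ h => congrArg start (mk_inj.1 h).1

theorem eq_path_of_pathInv_mul_eq {x : GIS src rng} (h : pathInv u * x = vert src rng u.range) :
    x = path u := by
  rcases eq_zero_or_exists_eq_mk x with rfl | ⟨u', v', h', rfl⟩
  · exact absurd ((mul_zero _).symm.trans h) (vert_ne_zero _).symm
  refine mk_inj.2 ?_
  rcases mk_mul_mk_eq_mk h with ⟨hp, -, he, hv⟩ | ⟨hp, -, hs, he⟩
  · simp only [vertex_edges, List.nil_append] at he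
    exact ⟨(hp.eq_of_length_le (List.drop_eq_nil_iff.1 he.symm)).symm, hv.symm⟩
  · simp only [vertex_edges, List.nil_eq_append_iff, List.drop_eq_nil_iff] at he
    exact ⟨hp.eq_of_length_le he.2, (ext hs he.1.symm).symm⟩

theorem eq_pathInv_of_mul_path_eq {x : GIS src rng} (h : x * path u = vert src rng u.range) :
    x = pathInv u := by
  rcases eq_zero_or_exists_eq_mk x with rfl | ⟨u', v', h', rfl⟩
  · exact absurd h.symm (vert_ne_zero _)
  refine mk_inj.2 ?_
  rcases mk_mul_mk_eq_mk h with ⟨hp, hs, he, -⟩ | ⟨hp, hu, -, he⟩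
  · simp only [vertex_edges, List.nil_eq_append_iff, List.drop_eq_nil_iff] at he
    exact ⟨(ext hs he.1.symm).symm, hp.eq_of_length_le he.2⟩
  · simp only [vertex_edges, List.nil_append] at he
    exact ⟨hu.symm, (hp.eq_of_length_le (List.drop_eq_nil_iff.1 he.symm)).symm⟩

theorem exists_isPrefix_of_mul_path_eq {x : GIS src rng} (h : x * path u = path u) :
    ∃ p, p.IsPrefix u ∧ x = proj p := by
  rcases eq_zero_or_exists_eq_mk x with rfl | ⟨u', v', h', rfl⟩
  · exact absurd h.symm mk_ne_zero
  rcases mk_mul_mk_eq_mk h with ⟨hp, hs, he, -⟩ | ⟨hp, hu, -, he⟩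
  · have hu' : u'.IsPrefix u := ⟨hs.symm, _, he.symm⟩
    have hl : u'.edges.length = v'.edges.length := by
      have hlen := congrArg List.length he
      simp only [List.length_append, List.length_drop] at hlen
      have hle := hp.2.length_le
      omega
    obtain rfl := hu'.eq_of_length_eq hp hl
    exact ⟨u', hu', rfl⟩
  · simp only [vertex_edges, List.nil_append] at he
    obtain rfl := hu
    obtain rfl := hp.eq_of_length_le (List.drop_eq_nil_iff.1 he.symm)
    exact ⟨u, .refl u, rfl⟩

theorem isPrefix_of_proj_mul {q : GPath src rng} (hne : proj q * mk u v huv ≠ mk u v huv)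
    (h0 : proj q * mk u v huv ≠ 0) : u.IsPrefix q := by
  by_contra hu
  by_cases hq : q.IsPrefix u
  · exact hne (mk_mul_mk_of_isPrefix hq hq.1.symm hq.edges_eq_append_drop huv)
  · exact h0 (mk_mul_mk_eq_zero hq hu)

theorem isPrefix_of_mul_proj {p : GPath src rng} (hne : mk u v huv * proj p ≠ mk u v huv)
    (h0 : mk u v huv * proj p ≠ 0) : v.IsPrefix p := by
  by_contra hv
  by_cases hp : p.IsPrefix v
  · exact hne (mk_mul_mk_of_isPrefix' hp hp.1.symm hp.edges_eq_append_drop huv)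
  · exact h0 (mk_mul_mk_eq_zero hv hp)

theorem finite_setOf_isPrefix_isPrefix (q p : GPath src rng) :
    {x : GIS src rng | ∃ u v h, x = mk u v h ∧ u.IsPrefix q ∧ v.IsPrefix p}.Finite := by
  refine Set.Finite.of_finite_image (f := Option.map Subtype.val) ?_
    (Option.map_injective Subtype.val_injective).injOn
  refine (((finite_setOf_isPrefix q).prod (finite_setOf_isPrefix p)).image some).subset ?_
  rintro _ ⟨_, ⟨u, v, h, rfl, hu, hv⟩, rfl⟩
  exact ⟨(u, v), ⟨hu, hv⟩, rfl⟩

theorem exists_path_ne_nil_of_ne_vert {x : GIS src rng} (h₁ : vert src rng f * x ≠ 0)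
    (h₂ : x * vert src rng f ≠ 0) (hx : x ≠ vert src rng f) :
    ∃ c : GPath src rng, c.start = f ∧ c.edges ≠ [] := by
  rcases eq_zero_or_exists_eq_mk x with rfl | ⟨u, v, h, rfl⟩
  · exact absurd (mul_zero _) h₁
  have hu : u.start = f := by_contra fun hu => h₁ (vert_mul_mk_of_ne hu)
  have hv : v.start = f := by_contra fun hv => h₂ (mk_mul_vert_of_ne hv)
  by_cases hue : u.edges = []
  · by_cases hve : v.edges = []
    · exact absurd (mk_inj.2 ⟨ext hu hue, ext hv hve⟩) hx
    · exact ⟨v, hv, hve⟩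
  · exact ⟨u, hu, hue⟩

end GIS

section Topology

open Filter Topology Set Function

variable {X ι : Type*} [TopologicalSpace X]

theorem CLPCompact.finite_of_isClosed [T1Space X] (h : CLPCompact X) {B : Set X}
    (hB : IsClosed B) (hiso : ∀ b ∈ B, IsOpen ({b} : Set X)) : B.Finite := by
  have hBo : IsOpen B := by
    rw [← biUnion_of_singleton B]
    exact isOpen_biUnion hiso
  obtain ⟨ℱ, hℱ, hfin, hcov⟩ := h (insert Bᶜ ((fun b => {b}) '' B))
    (by
      rintro U (rfl | ⟨b, hb, rfl⟩)
      · exact ⟨hBo.isClosed_compl, hB.isOpen_compl⟩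
      · exact ⟨isClosed_singleton, hiso b hb⟩)
    (by
      refine eq_univ_of_forall fun x => ?_
      by_cases hx : x ∈ B
      · exact ⟨{x}, Or.inr ⟨x, hx, rfl⟩, rfl⟩
      · exact ⟨Bᶜ, Or.inl rfl, hx⟩)
  refine ((hfin.sdiff (t := {Bᶜ})).sUnion fun U hU => ?_).subset fun b hb => ?_
  · rcases hℱ hU.1 with hU' | ⟨c, -, rfl⟩
    · exact absurd hU' hU.2
    · exact finite_singleton c
  · obtain ⟨U, hU, hbU⟩ := hcov ▸ mem_univ b
    exact ⟨U, ⟨hU, by rintro rfl; exact hbU hb⟩, hbU⟩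

theorem CLPCompact.tendsto_cofinite_of_ultrafilter [T1Space X] (hCLP : CLPCompact X)
    {C : ι → X} (hinj : Injective C) (hiso : ∀ i, IsOpen ({C i} : Set X)) {z : X}
    (h : ∀ (l : Ultrafilter ι) (x : X), (l : Filter ι) ≤ cofinite → Tendsto C l (𝓝 x) → x = z) :
    Tendsto C cofinite (𝓝 z) := by
  refine tendsto_nhds.2 fun W hW hzW => mem_cofinite.2 ?_
  by_contra hbad
  set bad := (C ⁻¹' W)ᶜ
  have hB : ¬ IsClosed (C '' bad) := fun hcl => hbad <|
    (CLPCompact.finite_of_isClosed hCLP hcl (forall_mem_image.2 fun i _ => hiso i)).of_finite_image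
      hinj.injOn
  obtain ⟨x, hxcl, hxB⟩ : ∃ x ∈ closure (C '' bad), x ∉ C '' bad := by
    by_contra! hsub
    exact hB (closure_subset_iff_isClosed.1 hsub)
  have hx : MapClusterPt x cofinite C := by
    refine mapClusterPt_iff_frequently.2 fun N hN => frequently_cofinite_iff_infinite.2 ?_
    intro hfin
    have hN' : N \ C '' ({i | C i ∈ N} ∩ bad) ∈ 𝓝 x :=
      sdiff_mem hN <| ((hfin.inter_of_left _).image C).isClosed.compl_mem_nhds
        fun h => hxB (image_mono inter_subset_right h)
    obtain ⟨_, ⟨hyN, hy⟩, i, hi, rfl⟩ := mem_closure_iff_nhds.1 hxcl _ hN'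
    exact hy ⟨i, ⟨hyN, hi⟩, rfl⟩
  obtain ⟨l, hl, hlx⟩ := mapClusterPt_iff_ultrafilter.1 hx
  have hxW : x ∈ Wᶜ :=
    closure_minimal (image_subset_iff.2 fun _ hi => hi) hW.isClosed_compl hxcl
  exact hxW (h l x hl hlx ▸ hzW)

theorem frequently_ne_of_le_cofinite {l : Filter ι} [l.NeBot] (hl : l ≤ cofinite) :
    ∃ᶠ p in l ×ˢ l, p.1 ≠ p.2 := by
  intro h
  obtain ⟨s, hs, t, ht, hst⟩ := eventually_prod_iff.1 h
  obtain ⟨i, hi⟩ := hs.exists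
  obtain ⟨j, hj, hji⟩ := (ht.and (hl (eventually_cofinite_ne i))).exists
  exact hst hi hj hji.symm

theorem eventually_ne_of_tendsto [T2Space X] {f g : ι → X} {l : Filter ι} {a b : X}
    (hf : Tendsto f l (𝓝 a)) (hg : Tendsto g l (𝓝 b)) (hab : a ≠ b) : ∀ᶠ i in l, f i ≠ g i :=
  not_frequently.1 fun h => hab (tendsto_nhds_unique_of_frequently_eq hf hg h)

theorem isOpen_singleton_of_denseRange [T1Space X] {M : Type*} {φ : M → X}
    (hd : DenseRange φ) {T : Set X} (hT : IsOpen T) {c : X} (hc : c ∈ T)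
    (h : ∀ x, φ x ∈ T → φ x = c) : IsOpen ({c} : Set X) := by
  convert hT
  refine (eq_singleton_iff_unique_mem.2 ⟨hc, fun s hs => ?_⟩).symm
  by_contra hne
  obtain ⟨x, hxT, hxc⟩ := hd.exists_mem_open (hT.inter isOpen_compl_singleton) ⟨s, hs, hne⟩
  exact hxc (h x hxT)

theorem tendsto_map_const_mul [Mul X] [ContinuousMul X] {M : Type*} [Mul M] {φ : M →ₙ* X}
    {F : Filter M} {w : X} (hφ : Tendsto φ F (𝓝 w)) (a : M) :
    Tendsto (fun x => φ (a * x)) F (𝓝 (φ a * w)) := by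
  simpa only [map_mul] using tendsto_const_nhds.mul hφ

theorem tendsto_map_mul_const [Mul X] [ContinuousMul X] {M : Type*} [Mul M] {φ : M →ₙ* X}
    {F : Filter M} {w : X} (hφ : Tendsto φ F (𝓝 w)) (a : M) :
    Tendsto (fun x => φ (x * a)) F (𝓝 (w * φ a)) := by
  simpa only [map_mul] using hφ.mul tendsto_const_nhds

variable [T2Space X] [Mul X] [ContinuousMul X]

theorem CLPCompact.tendsto_cofinite_of_mul_self (hCLP : CLPCompact X) {A : ι → X}
    (hinj : Injective A) (hiso : ∀ i, IsOpen ({A i} : Set X)) {z : X}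
    (hidem : ∀ i, A i * A i = A i) (horth : ∀ i j, i ≠ j → A i * A j = z) :
    Tendsto A cofinite (𝓝 z) := by
  refine CLPCompact.tendsto_cofinite_of_ultrafilter hCLP hinj hiso fun l x hl hx => ?_
  have hxx : x * x = x := tendsto_nhds_unique (hx.mul hx) (by simpa only [hidem] using hx)
  have hxz : x * x = z := tendsto_nhds_unique_of_frequently_eq
    ((hx.comp tendsto_fst).mul (hx.comp tendsto_snd)) tendsto_const_nhds
    ((frequently_ne_of_le_cofinite hl).mono fun p hp => horth _ _ hp)
  rw [← hxx, hxz]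

theorem CLPCompact.tendsto_cofinite_of_mul_left (hCLP : CLPCompact X) {A C : ι → X}
    (hinj : Injective C) (hiso : ∀ i, IsOpen ({C i} : Set X)) {z : X} (hz : ∀ x, z * x = z)
    (hA : Tendsto A cofinite (𝓝 z)) (hAC : ∀ i, A i * C i = C i) :
    Tendsto C cofinite (𝓝 z) :=
  CLPCompact.tendsto_cofinite_of_ultrafilter hCLP hinj hiso fun _ _ hl hx =>
    tendsto_nhds_unique hx (by simpa only [hAC, hz] using (hA.mono_left hl).mul hx)

theorem CLPCompact.tendsto_cofinite_of_mul_right (hCLP : CLPCompact X) {A C : ι → X}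
    (hinj : Injective C) (hiso : ∀ i, IsOpen ({C i} : Set X)) {z : X} (hz : ∀ x, x * z = z)
    (hA : Tendsto A cofinite (𝓝 z)) (hCA : ∀ i, C i * A i = C i) :
    Tendsto C cofinite (𝓝 z) :=
  CLPCompact.tendsto_cofinite_of_ultrafilter hCLP hinj hiso fun _ _ hl hx =>
    tendsto_nhds_unique hx (by simpa only [hCA, hz] using hx.mul (hA.mono_left hl))

end Topology

namespace GIS

open Filter Topology Set Function GPath

variable {S : Type*} [TopologicalSpace S] [T2Space S] [Mul S] [ContinuousMul S]
  {φ : GIS src rng →ₙ* S}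

theorem map_zero_mul (hd : DenseRange φ) (s : S) : φ 0 * s = φ 0 :=
  congrFun (hd.equalizer (continuous_const.mul continuous_id) continuous_const
    (funext fun x => by simp [← map_mul, GIS.zero_mul])) s

theorem mul_map_zero (hd : DenseRange φ) (s : S) : s * φ 0 = φ 0 :=
  congrFun (hd.equalizer (continuous_id.mul continuous_const) continuous_const
    (funext fun x => by simp [← map_mul, mul_zero])) s

/-- Since `c c⁻¹ f = f c c⁻¹ = c c⁻¹ ∉ {f, 0}`, elements `x` near `f` satisfy `c c⁻¹ x ∉ {x, 0}`
and `x c c⁻¹ ∉ {x, 0}`. -/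
theorem eventually_isPrefix (hinj : Injective φ) {F : Filter (GIS src rng)} {f : V}
    (hφ : Tendsto φ F (𝓝 (φ (vert src rng f)))) {c : GPath src rng} (hcf : c.start = f)
    (hc : c.edges ≠ []) :
    ∀ᶠ x in F, ∃ u v h, x = mk u v h ∧ u.IsPrefix c ∧ v.IsPrefix c := by
  set w := φ (vert src rng f)
  have hcw : φ (proj c) * w = φ (proj c) := by rw [← map_mul, proj_mul_vert hcf]
  have hwc : w * φ (proj c) = φ (proj c) := by rw [← map_mul, vert_mul_proj hcf]
  have hcne : φ (proj c) ≠ w := hinj.ne (proj_ne_vert hc)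
  have hc0 : φ (proj c) ≠ φ 0 := hinj.ne mk_ne_zero
  filter_upwards [eventually_ne_of_tendsto (tendsto_map_const_mul hφ (proj c)) hφ (by rwa [hcw]),
    (tendsto_map_const_mul hφ (proj c)).eventually_ne (by rwa [hcw]),
    eventually_ne_of_tendsto (tendsto_map_mul_const hφ (proj c)) hφ (by rwa [hwc]),
    (tendsto_map_mul_const hφ (proj c)).eventually_ne (by rwa [hwc])] with x hl hl0 hr hr0
  rcases eq_zero_or_exists_eq_mk x with rfl | ⟨u, v, huv, rfl⟩
  · exact absurd (by rw [mul_zero]) hl0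
  · exact ⟨u, v, huv, rfl,
      isPrefix_of_proj_mul (fun h => hl (by rw [h])) (fun h => hl0 (by rw [h])),
      isPrefix_of_mul_proj (fun h => hr (by rw [h])) (fun h => hr0 (by rw [h]))⟩

theorem isOpen_singleton_vert (hinj : Injective φ) (hd : DenseRange φ) (f : V) :
    IsOpen {φ (vert src rng f)} := by
  set w := φ (vert src rng f)
  by_contra hw
  have : (𝓝[≠] w).NeBot := ⟨fun h => hw ((isOpen_singleton_iff_punctured_nhds w).2 h)⟩
  set F := comap φ (𝓝[range φ \ {w}] w)
  have : F.NeBot := NeBot.comap_of_range_mem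
    (mem_closure_iff_nhdsWithin_neBot.1 (hd.sdiff_singleton w w))
    (mem_of_superset self_mem_nhdsWithin sdiff_subset)
  have hφ : Tendsto φ F (𝓝 w) := tendsto_comap.mono_right nhdsWithin_le_nhds
  have hne : ∀ᶠ x in F, φ x ≠ w :=
    tendsto_comap.eventually (p := (· ≠ w)) (mem_of_superset self_mem_nhdsWithin fun _ h => h.2)
  have hww : w * w = w := by rw [← map_mul, vert_mul_self]
  have hw0 : w ≠ φ 0 := hinj.ne (vert_ne_zero f)
  obtain ⟨x₀, hx₀, hx₀l, hx₀r⟩ := (hne.and (((tendsto_map_const_mul hφ _).eventually_ne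
    (by rwa [hww])).and ((tendsto_map_mul_const hφ _).eventually_ne (by rwa [hww])))).exists
  obtain ⟨c, hcf, hc⟩ := exists_path_ne_nil_of_ne_vert (f := f) (fun h => hx₀l (by rw [h]))
    (fun h => hx₀r (by rw [h])) (fun h => hx₀ (by rw [h]))
  set P := {x : GIS src rng | ∃ u v h, x = mk u v h ∧ u.IsPrefix c ∧ v.IsPrefix c}
  have hPc : ∀ᶠ x in F, φ x ∉ φ '' P \ {w} := hφ.eventually <|
    (((finite_setOf_isPrefix_isPrefix c c).image φ).sdiff (t := {w})).isClosed.compl_mem_nhds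
      fun h => h.2 rfl
  obtain ⟨x, ⟨hxw, hxP⟩, hx⟩ := ((hne.and (eventually_isPrefix hinj hφ hcf hc)).and hPc).exists
  exact hx ⟨mem_image_of_mem φ hxP, hxw⟩

theorem isOpen_singleton_path (hinj : Injective φ) (hd : DenseRange φ) (u : GPath src rng) :
    IsOpen {φ (path u)} :=
  isOpen_singleton_of_denseRange hd (T := (φ (pathInv u) * ·) ⁻¹' {φ (vert src rng u.range)})
    ((isOpen_singleton_vert hinj hd u.range).preimage (continuous_const.mul continuous_id))
    (by rw [mem_preimage, mem_singleton_iff, ← map_mul, pathInv_mul_path])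
    fun x hx => congrArg φ (eq_path_of_pathInv_mul_eq (hinj (by simpa [map_mul] using hx)))

theorem isOpen_singleton_pathInv (hinj : Injective φ) (hd : DenseRange φ) (u : GPath src rng) :
    IsOpen {φ (pathInv u)} :=
  isOpen_singleton_of_denseRange hd (T := (· * φ (path u)) ⁻¹' {φ (vert src rng u.range)})
    ((isOpen_singleton_vert hinj hd u.range).preimage (continuous_id.mul continuous_const))
    (by rw [mem_preimage, mem_singleton_iff, ← map_mul, pathInv_mul_path])
    fun x hx => congrArg φ (eq_pathInv_of_mul_path_eq (hinj (by simpa [map_mul] using hx)))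

theorem isOpen_singleton_proj (hinj : Injective φ) (hd : DenseRange φ) (u : GPath src rng) :
    IsOpen {φ (proj u)} := by
  set Q := φ '' (proj '' {p | p.IsPrefix u}) \ {φ (proj u)}
  refine isOpen_singleton_of_denseRange hd (T := (· * φ (path u)) ⁻¹' {φ (path u)} \ Q)
    (((isOpen_singleton_path hinj hd u).preimage (continuous_id.mul continuous_const)).sdiff
      (((finite_setOf_isPrefix u).image _).image _).sdiff.isClosed)
    ⟨by simp [← map_mul, proj_mul_path], fun h => h.2 rfl⟩ fun x hx => ?_
  obtain ⟨p, hp, rfl⟩ := exists_isPrefix_of_mul_path_eq (hinj (by simpa [map_mul] using hx.1))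
  by_contra hne
  exact hx.2 ⟨⟨_, ⟨p, hp, rfl⟩, rfl⟩, hne⟩

theorem tendsto_vert (hCLP : CLPCompact S) (hinj : Injective φ) (hd : DenseRange φ) :
    Tendsto (fun f => φ (vert src rng f)) cofinite (𝓝 (φ 0)) :=
  CLPCompact.tendsto_cofinite_of_mul_self hCLP (A := fun f => φ (vert src rng f))
    (hinj.comp vert_injective)
    (isOpen_singleton_vert hinj hd) (fun f => by rw [← map_mul, vert_mul_self])
    fun f g hfg => by rw [← map_mul, vert_mul_vert_of_ne hfg]

theorem finite_setOf_range_eq (hCLP : CLPCompact S) (hinj : Injective φ) (hd : DenseRange φ)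
    {f : V} (hf : ¬ HasCycleAt src rng f) : {u : GPath src rng | u.range = f}.Finite := by
  by_contra hinf
  have : Infinite {u : GPath src rng // u.range = f} := Set.infinite_coe_iff.2 hinf
  have hproj := CLPCompact.tendsto_cofinite_of_mul_self hCLP
    (A := fun u : {u : GPath src rng // u.range = f} => φ (proj u.1))
    (hinj.comp (proj_injective.comp Subtype.val_injective))
    (fun u => isOpen_singleton_proj hinj hd u.1) (fun u => by rw [← map_mul, proj_mul_self])
    fun u u' hne => by
      rw [← map_mul, proj_mul_proj_of_ne hf u.2 u'.2 (Subtype.val_injective.ne hne)]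
  have hpath := CLPCompact.tendsto_cofinite_of_mul_left hCLP
    (C := fun u : {u : GPath src rng // u.range = f} => φ (path u.1))
    (hinj.comp (path_injective.comp Subtype.val_injective))
    (fun u => isOpen_singleton_path hinj hd u.1) (map_zero_mul hd) hproj
    fun u => by rw [← map_mul, proj_mul_path]
  have hpathInv := CLPCompact.tendsto_cofinite_of_mul_right hCLP
    (C := fun u : {u : GPath src rng // u.range = f} => φ (pathInv u.1))
    (hinj.comp (pathInv_injective.comp Subtype.val_injective))
    (fun u => isOpen_singleton_pathInv hinj hd u.1) (mul_map_zero hd) hproj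
    fun u => by rw [← map_mul, pathInv_mul_proj]
  have hvert : Tendsto (fun _ : {u : GPath src rng // u.range = f} => φ (vert src rng f)) cofinite
      (𝓝 (φ 0 * φ 0)) :=
    (hpathInv.mul hpath).congr fun u => by rw [← map_mul, pathInv_mul_path, u.2]
  rw [map_zero_mul hd] at hvert
  exact vert_ne_zero f (hinj (tendsto_nhds_unique tendsto_const_nhds hvert))

theorem tendsto_range_cofinite (hCLP : CLPCompact S) (hinj : Injective φ) (hd : DenseRange φ) :
    Tendsto (fun u : {u : GPath src rng // ¬ HasCycleAt src rng u.range} => u.1.range)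
      cofinite cofinite := by
  refine Tendsto.cofinite_of_finite_preimage_singleton fun f => Set.Finite.to_subtype ?_
  by_cases hf : HasCycleAt src rng f
  · exact Set.finite_empty.subset fun u (hu : u.1.range = f) => u.2 (hu ▸ hf)
  · exact (finite_setOf_range_eq hCLP hinj hd hf).preimage (f := Subtype.val)
      Subtype.val_injective.injOn

theorem tendsto_path (hCLP : CLPCompact S) (hinj : Injective φ) (hd : DenseRange φ) :
    Tendsto (fun u : {u : GPath src rng // ¬ HasCycleAt src rng u.range} => φ (path u.1))
      cofinite (𝓝 (φ 0)) :=
  CLPCompact.tendsto_cofinite_of_mul_right hCLP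
    (hinj.comp (path_injective.comp Subtype.val_injective))
    (fun u => isOpen_singleton_path hinj hd u.1) (mul_map_zero hd)
    ((tendsto_vert hCLP hinj hd).comp (tendsto_range_cofinite hCLP hinj hd))
    fun u => (map_mul φ _ _).symm.trans (congrArg φ (path_mul_vert u.1))

theorem tendsto_pathInv (hCLP : CLPCompact S) (hinj : Injective φ) (hd : DenseRange φ) :
    Tendsto (fun u : {u : GPath src rng // ¬ HasCycleAt src rng u.range} => φ (pathInv u.1))
      cofinite (𝓝 (φ 0)) :=
  CLPCompact.tendsto_cofinite_of_mul_left hCLP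
    (hinj.comp (pathInv_injective.comp Subtype.val_injective))
    (fun u => isOpen_singleton_pathInv hinj hd u.1) (map_zero_mul hd)
    ((tendsto_vert hCLP hinj hd).comp (tendsto_range_cofinite hCLP hinj hd))
    fun u => (map_mul φ _ _).symm.trans (congrArg φ (vert_mul_pathInv u.1))

theorem finite_setOf_fst_eq (hCLP : CLPCompact S) (hinj : Injective φ) (hd : DenseRange φ)
    {u : GPath src rng} (hu : ¬ HasCycleAt src rng u.range) :
    {a : GISElem src rng | a.1.1 = u}.Finite := by
  refine Set.Finite.of_finite_image (f := fun a => a.1.2)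
    ((finite_setOf_range_eq hCLP hinj hd hu).subset ?_)
    fun a ha b hb h => Subtype.ext (Prod.ext (ha.trans hb.symm) h)
  rintro _ ⟨a, rfl, rfl⟩
  exact a.2.symm

theorem finite_setOf_snd_eq (hCLP : CLPCompact S) (hinj : Injective φ) (hd : DenseRange φ)
    {v : GPath src rng} (hv : ¬ HasCycleAt src rng v.range) :
    {a : GISElem src rng | a.1.2 = v}.Finite := by
  refine Set.Finite.of_finite_image (f := fun a => a.1.1)
    ((finite_setOf_range_eq hCLP hinj hd hv).subset ?_)
    fun a ha b hb h => Subtype.ext (Prod.ext h (ha.trans hb.symm))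
  rintro _ ⟨a, rfl, rfl⟩
  exact a.2

theorem tendsto_some (hCLP : CLPCompact S) (hinj : Injective φ) (hd : DenseRange φ) :
    Tendsto (fun a : {a : GISElem src rng // ¬ HasCycleAt src rng a.1.1.range} => φ (some a.1))
      cofinite (𝓝 (φ 0)) := by
  set U := {u : GPath src rng // ¬ HasCycleAt src rng u.range}
  set D := {a : GISElem src rng // ¬ HasCycleAt src rng a.1.1.range}
  have hfst : Tendsto (fun a : D => (⟨a.1.1.1, a.2⟩ : U)) cofinite cofinite :=
    Tendsto.cofinite_of_finite_preimage_singleton fun u => Set.Finite.to_subtype <|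
      ((finite_setOf_fst_eq hCLP hinj hd u.2).preimage (f := Subtype.val)
        Subtype.val_injective.injOn).subset fun a ha => congrArg Subtype.val ha
  have hsnd : Tendsto (fun a : D => (⟨a.1.1.2, a.1.2 ▸ a.2⟩ : U)) cofinite cofinite :=
    Tendsto.cofinite_of_finite_preimage_singleton fun v => Set.Finite.to_subtype <|
      ((finite_setOf_snd_eq hCLP hinj hd v.2).preimage (f := Subtype.val)
        Subtype.val_injective.injOn).subset fun a ha => congrArg Subtype.val ha
  have hprod :=
    ((tendsto_path hCLP hinj hd).comp hfst).mul ((tendsto_pathInv hCLP hinj hd).comp hsnd)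
  rw [map_zero_mul hd] at hprod
  exact hprod.congr fun a => (map_mul φ _ _).symm.trans (congrArg φ (path_mul_pathInv a.1.2))

end GIS

end GISPaper

open GISPaper in
theorem statement7_general {V E : Type*} (src rng : E → V)
    {S : Type*} [TopologicalSpace S] [T2Space S] [Mul S]
    (hSmul : Continuous (fun p : S × S => p.1 * p.2))
    (hCLP : CLPCompact S)
    (ι : GIS src rng → S) (hinj : Function.Injective ι)
    (hhom : ∀ x y : GIS src rng, ι (x * y) = ι x * ι y)
    (hdense : DenseRange ι) :
    (∀ f : V, ¬ HasCycleAt src rng f → {u : GPath src rng | u.range = f}.Finite) ∧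
    IsCompact (ι '' ({0} ∪ {x : GIS src rng | ∃ p : GISElem src rng,
      x = some p ∧ ¬ HasCycleAt src rng p.1.1.range})) := by
  have : ContinuousMul S := ⟨hSmul⟩
  let φ : GIS src rng →ₙ* S := ⟨ι, hhom⟩
  refine ⟨fun f hf => GIS.finite_setOf_range_eq (φ := φ) hCLP hinj hdense hf, ?_⟩
  convert (GIS.tendsto_some (φ := φ) hCLP hinj hdense).isCompact_insert_range_of_cofinite using 1
  rw [Set.image_union, Set.image_singleton, Set.singleton_union]
  congr 1
  ext s
  constructor
  · rintro ⟨_, ⟨p, rfl, hp⟩, rfl⟩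
    exact ⟨⟨p, hp⟩, rfl⟩
  · rintro ⟨⟨p, hp⟩, rfl⟩
    exact ⟨some p, ⟨p, rfl, hp⟩, rfl⟩

open GISPaper in
/-- Let a graph inverse semigroup `G(E)` be a dense subsemigroup of a
Hausdorff CLP-compact topological semigroup `S`. Then for every vertex `f` through
which no cycle passes the set `I_f = {u ∈ Path(E) : r(u) = f}` is finite; moreover,
the set `{uv⁻¹ ∈ G(E) : no cycle passes through r(u)} ∪ {0}` is compact in `S`. -/
theorem statement7 {V E : Type*} (src rng : E → V)
    {S : Type*} [TopologicalSpace S] [T2Space S] [Mul S]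
    (hassoc : ∀ a b c : S, a * b * c = a * (b * c))
    (hSmul : Continuous (fun p : S × S => p.1 * p.2))
    (hCLP : CLPCompact S)
    (ι : GIS src rng → S) (hinj : Function.Injective ι)
    (hhom : ∀ x y : GIS src rng, ι (x * y) = ι x * ι y)
    (hdense : DenseRange ι) :
    (∀ f : V, ¬ HasCycleAt src rng f → {u : GPath src rng | u.range = f}.Finite) ∧
    IsCompact (ι '' ({0} ∪ {x : GIS src rng | ∃ p : GISElem src rng,
      x = some p ∧ ¬ HasCycleAt src rng p.1.1.range})) :=
  statement7_general src rng hSmul hCLP ι hinj hhom hdense
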